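/- Let λ > 0, c > 0, t > 0, 0 < u < ct, and define F(u,t) = ∑_{k=0}^∞ (λ/(2c))^{2k} (c²t² − u²)^k / (k!)². Then the planar density in the second form satisfies the decomposition (e^{−λt}/c) [ λ F(u,t) + (∂F/∂t)(u,t) + (2c²/λ)(∂²F/∂u²)(u,t) ] = ∑_{k=0}^∞ e^{−λt} ((λt)^{2k+2}/(2k+2)!) · ((2k+2)!/(k!(k+1)!)) · (c²t² − u²)^k / (2ct)^{2k+1} + ∑_{k=1}^∞ e^{−λt} ((λt)^{2k+1}/(2k+1)!) · ((2k+1)!/(2^{2k}(ct)^{2k+1}(k−1)!(k+1)!)) · (c²t² − u²)^{k−1}(c²t² + u²). -/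

import Mathlib

/-!
With `q = (λ/(2c))²` and `G(z) = ∑ qᵏ zᵏ / (k!)²`, we have `F(u,t) = G(c²t² − u²)`.
Writing `X = c²t² − u²`, the even-`N(t)` series on the right is `2ct e^{−λt} G'(X)` and the
odd-`N(t)` series is `(4c/λ) e^{−λt} (c²t² + u²) G''(X)`. After the chain rule in `t` and `u`,
the claimed identity reduces to the Bessel equation `X G''(X) + G'(X) = q G(X)`, which on
coefficients `aₖ = qᵏ/(k!)²` is `(k+1)² aₖ₊₁ = q aₖ`.
-/

open Nat

/-- `F(u,t) = ∑_{k=0}^∞ (λ/(2c))^{2k} (c²t² − u²)^k / (k!)²`,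
which equals `I₀((λ/c)√(c²t² − u²))` for `|u| ≤ ct`. -/
noncomputable def F (lam c u t : ℝ) : ℝ :=
  ∑' k : ℕ, (lam / (2 * c)) ^ (2 * k) * (c ^ 2 * t ^ 2 - u ^ 2) ^ k /
    ((Nat.factorial k : ℝ)) ^ 2

noncomputable def seriesSum (b : ℕ → ℝ) (z : ℝ) : ℝ := ∑' k, b k * z ^ k

def derivCoeff (b : ℕ → ℝ) (k : ℕ) : ℝ := (k + 1) * b (k + 1)

section PowerSeries

variable {b : ℕ → ℝ}

theorem summable_mul_pow_of_summable_norm (hb : ∀ R : ℝ, Summable fun k => ‖b k‖ * R ^ k)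
    (x : ℝ) : Summable fun k => b k * x ^ k :=
  .of_norm <| by simpa only [norm_mul, norm_pow] using hb ‖x‖

theorem summable_norm_derivCoeff_mul_pow (hb : ∀ R : ℝ, Summable fun k => ‖b k‖ * R ^ k)
    (R : ℝ) : Summable fun k => ‖derivCoeff b k‖ * R ^ k := by
  set S := 2 * ‖R‖ + 1
  have hS : 1 ≤ S := by linarith [norm_nonneg R]
  refine .of_norm_bounded ((summable_nat_add_iff 1).mpr (hb S)) fun k => ?_
  have hk : (k + 1 : ℝ) ≤ 2 ^ k := by exact_mod_cast Nat.lt_two_pow_self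
  calc ‖‖derivCoeff b k‖ * R ^ k‖ = ‖b (k + 1)‖ * ((k + 1) * ‖R‖ ^ k) := by
        rw [derivCoeff, norm_mul, norm_norm, norm_mul, norm_pow,
          Real.norm_of_nonneg (by positivity : (0 : ℝ) ≤ k + 1)]
        ring
    _ ≤ ‖b (k + 1)‖ * S ^ (k + 1) := by
        gcongr
        calc (k + 1 : ℝ) * ‖R‖ ^ k ≤ 2 ^ k * ‖R‖ ^ k := by gcongr
          _ = (2 * ‖R‖) ^ k := (mul_pow _ _ _).symm
          _ ≤ S ^ k := by gcongr; linarith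
          _ ≤ S ^ (k + 1) := pow_le_pow_right₀ hS k.le_succ

theorem hasDerivAt_seriesSum (hb : ∀ R : ℝ, Summable fun k => ‖b k‖ * R ^ k) (x : ℝ) :
    HasDerivAt (seriesSum b) (seriesSum (derivCoeff b) x) x := by
  set R := ‖x‖ + 1
  have hx : x ∈ Metric.ball (0 : ℝ) R := by simp [R]
  have hbound : ∀ n, ∀ y ∈ Metric.ball (0 : ℝ) R,
      ‖b n * (n * y ^ (n - 1))‖ ≤ ‖b n‖ * (n * R ^ (n - 1)) := by
    intro n y hy
    rw [mem_ball_zero_iff] at hy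
    rw [norm_mul, norm_mul, norm_pow, Real.norm_natCast]
    gcongr
  have hsum : Summable fun n => ‖b n‖ * (n * R ^ (n - 1)) := by
    refine (summable_nat_add_iff 1).mp ?_
    refine (summable_norm_derivCoeff_mul_pow hb R).congr fun k => ?_
    rw [derivCoeff, norm_mul, Real.norm_of_nonneg (by positivity : (0 : ℝ) ≤ k + 1)]
    push_cast
    ring
  have key := hasDerivAt_tsum_of_isPreconnected hsum Metric.isOpen_ball
    (convex_ball (0 : ℝ) R).isPreconnected
    (fun n y _ => (hasDerivAt_pow n y).const_mul (b n)) hbound hx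
    (summable_mul_pow_of_summable_norm hb x) hx
  refine key.congr_deriv ?_
  rw [tsum_eq_zero_add' ?_]
  · simp only [seriesSum, derivCoeff, CharP.cast_eq_zero, zero_mul, mul_zero, zero_add,
      Nat.add_sub_cancel]
    push_cast
    exact tsum_congr fun k => by ring
  · refine (summable_mul_pow_of_summable_norm (summable_norm_derivCoeff_mul_pow hb) x).congr
      fun k => ?_
    simp only [derivCoeff, Nat.add_sub_cancel]
    push_cast
    ring

theorem mul_seriesSum_derivCoeff_derivCoeff_add
    (hb : ∀ R : ℝ, Summable fun k => ‖b k‖ * R ^ k) (z : ℝ) :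
    z * seriesSum (derivCoeff (derivCoeff b)) z + seriesSum (derivCoeff b) z =
      ∑' k, (k + 1) * derivCoeff b k * z ^ k := by
  set d := derivCoeff b
  have hd := summable_norm_derivCoeff_mul_pow hb
  have hshift : ∀ k : ℕ, ((k + 1 : ℕ) : ℝ) * d (k + 1) * z ^ (k + 1) =
      z * (derivCoeff d k * z ^ k) := fun k => by
    simp only [derivCoeff]; push_cast; ring
  have hsummable : Summable fun k : ℕ => (k : ℝ) * d k * z ^ k :=
    (summable_nat_add_iff 1).mp <| by
      simpa only [hshift] using
        (summable_mul_pow_of_summable_norm (summable_norm_derivCoeff_mul_pow hd) z).mul_left z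
  calc z * seriesSum (derivCoeff d) z + seriesSum d z
      = ∑' k : ℕ, (k : ℝ) * d k * z ^ k + seriesSum d z := by
        rw [tsum_eq_zero_add' ((summable_nat_add_iff 1).mpr hsummable)]
        simp only [hshift, seriesSum, tsum_mul_left, CharP.cast_eq_zero, zero_mul, zero_add]
    _ = ∑' k, (k + 1) * d k * z ^ k := by
        rw [seriesSum, ← hsummable.tsum_add (summable_mul_pow_of_summable_norm hd z)]
        exact tsum_congr fun k => by ring

theorem hasDerivAt_seriesSum_sub_sq (hb : ∀ R : ℝ, Summable fun k => ‖b k‖ * R ^ k)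
    (A x : ℝ) :
    HasDerivAt (fun v => seriesSum b (A - v ^ 2))
      (seriesSum (derivCoeff b) (A - x ^ 2) * -(2 * x)) x := by
  refine (hasDerivAt_seriesSum hb _).comp x ?_
  simpa using (hasDerivAt_pow 2 x).const_sub A

theorem iteratedDeriv_two_seriesSum_sub_sq (hb : ∀ R : ℝ, Summable fun k => ‖b k‖ * R ^ k)
    (A x : ℝ) :
    iteratedDeriv 2 (fun v => seriesSum b (A - v ^ 2)) x =
      seriesSum (derivCoeff (derivCoeff b)) (A - x ^ 2) * (2 * x) ^ 2 -
        2 * seriesSum (derivCoeff b) (A - x ^ 2) := by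
  have hderiv : deriv (fun v => seriesSum b (A - v ^ 2)) =
      fun v => seriesSum (derivCoeff b) (A - v ^ 2) * -(2 * v) :=
    funext fun v => (hasDerivAt_seriesSum_sub_sq hb A v).deriv
  rw [iteratedDeriv_succ, iteratedDeriv_one, hderiv]
  have hlin : HasDerivAt (fun v : ℝ => -(2 * v)) (-2) x := by
    simpa using ((hasDerivAt_id' x).const_mul 2).fun_neg
  rw [((hasDerivAt_seriesSum_sub_sq (summable_norm_derivCoeff_mul_pow hb) A x).fun_mul hlin).deriv]
  ring

end PowerSeries

/-- `∑ besselCoeff q k * zᵏ = I₀(2√(q z))` for `q z ≥ 0`. -/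
noncomputable def besselCoeff (q : ℝ) (k : ℕ) : ℝ := q ^ k / (k ! : ℝ) ^ 2

section Bessel

variable (q : ℝ)

theorem summable_norm_besselCoeff_mul_pow (R : ℝ) :
    Summable fun k => ‖besselCoeff q k‖ * R ^ k := by
  refine .of_norm_bounded (Real.summable_pow_div_factorial (‖q‖ * ‖R‖)) fun k => ?_
  have hk : (1 : ℝ) ≤ k ! := by exact_mod_cast k.factorial_pos
  rw [besselCoeff, norm_mul, norm_norm, norm_div, norm_pow, norm_pow, norm_pow,
    Real.norm_natCast, mul_pow, div_mul_eq_mul_div]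
  gcongr
  nlinarith

theorem derivCoeff_besselCoeff (k : ℕ) :
    derivCoeff (besselCoeff q) k = q ^ (k + 1) / (k ! * (k + 1)! : ℝ) := by
  rw [derivCoeff, besselCoeff, Nat.factorial_succ]
  push_cast
  field_simp

theorem derivCoeff_derivCoeff_besselCoeff (k : ℕ) :
    derivCoeff (derivCoeff (besselCoeff q)) k = q ^ (k + 2) / (k ! * (k + 2)! : ℝ) := by
  rw [derivCoeff, derivCoeff_besselCoeff, Nat.factorial_succ (k + 1), Nat.factorial_succ k]
  push_cast
  field_simp

theorem succ_mul_derivCoeff_besselCoeff (k : ℕ) :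
    (k + 1) * derivCoeff (besselCoeff q) k = q * besselCoeff q k := by
  rw [derivCoeff_besselCoeff, besselCoeff, Nat.factorial_succ]
  push_cast
  field_simp
  ring

theorem besselSeries_ode (z : ℝ) :
    z * seriesSum (derivCoeff (derivCoeff (besselCoeff q))) z +
        seriesSum (derivCoeff (besselCoeff q)) z = q * seriesSum (besselCoeff q) z := by
  rw [mul_seriesSum_derivCoeff_derivCoeff_add (summable_norm_besselCoeff_mul_pow q),
    seriesSum, ← tsum_mul_left]
  exact tsum_congr fun k => by rw [succ_mul_derivCoeff_besselCoeff]; ring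

end Bessel

theorem F_eq_seriesSum (lam c u t : ℝ) :
    F lam c u t = seriesSum (besselCoeff ((lam / (2 * c)) ^ 2)) (c ^ 2 * t ^ 2 - u ^ 2) :=
  tsum_congr fun k => by rw [besselCoeff, ← pow_mul]; ring

theorem tsum_evenMixture_eq {e lam c t x : ℝ} (hc : c ≠ 0) (ht : t ≠ 0) :
    ∑' k : ℕ, e * (lam * t) ^ (2 * k + 2) / ((2 * k + 2)! : ℝ) *
        (((2 * k + 2)! : ℝ) / ((k ! : ℝ) * ((k + 1)! : ℝ))) * x ^ k / (2 * c * t) ^ (2 * k + 1) =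
      2 * c * t * e *
        seriesSum (derivCoeff (besselCoeff ((lam / (2 * c)) ^ 2))) x := by
  rw [seriesSum, ← tsum_mul_left]
  refine tsum_congr fun k => ?_
  rw [derivCoeff_besselCoeff, ← pow_mul, div_pow]
  field_simp
  ring

theorem tsum_oddMixture_eq {e lam c t x y : ℝ} (hlam : lam ≠ 0) (hc : c ≠ 0) (ht : t ≠ 0) :
    ∑' k : ℕ, e * (lam * t) ^ (2 * (k + 1) + 1) / ((2 * (k + 1) + 1)! : ℝ) *
        (((2 * (k + 1) + 1)! : ℝ) /
          (2 ^ (2 * (k + 1)) * (c * t) ^ (2 * (k + 1) + 1) * (k ! : ℝ) * ((k + 2)! : ℝ))) *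
        x ^ k * y =
      4 * c * e / lam * y *
        seriesSum (derivCoeff (derivCoeff (besselCoeff ((lam / (2 * c)) ^ 2)))) x := by
  rw [seriesSum, ← tsum_mul_left]
  refine tsum_congr fun k => ?_
  rw [derivCoeff_derivCoeff_besselCoeff, ← pow_mul, div_pow]
  field_simp
  ring

/-- The odd-`N(t)` series is indexed from `k = 0` through the shift `k ↦ k + 1`. -/
theorem planarDensity_conditional_decomposition_general
    (lam c t u : ℝ) (hlam : 0 < lam) (hc : 0 < c) (ht : 0 < t) :
    Real.exp (-(lam * t)) / c *
        (lam * F lam c u t + deriv (fun s => F lam c u s) t +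
          2 * c ^ 2 / lam * iteratedDeriv 2 (fun v => F lam c v t) u) =
      (∑' k : ℕ, Real.exp (-(lam * t)) * (lam * t) ^ (2 * k + 2) /
          (Nat.factorial (2 * k + 2) : ℝ) *
          ((Nat.factorial (2 * k + 2) : ℝ) /
            ((Nat.factorial k : ℝ) * (Nat.factorial (k + 1) : ℝ))) *
          (c ^ 2 * t ^ 2 - u ^ 2) ^ k / (2 * c * t) ^ (2 * k + 1)) +
      (∑' k : ℕ, Real.exp (-(lam * t)) * (lam * t) ^ (2 * (k + 1) + 1) /
          (Nat.factorial (2 * (k + 1) + 1) : ℝ) *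
          ((Nat.factorial (2 * (k + 1) + 1) : ℝ) /
            (2 ^ (2 * (k + 1)) * (c * t) ^ (2 * (k + 1) + 1) *
              (Nat.factorial k : ℝ) * (Nat.factorial (k + 2) : ℝ))) *
          (c ^ 2 * t ^ 2 - u ^ 2) ^ k * (c ^ 2 * t ^ 2 + u ^ 2)) := by
  have hb := summable_norm_besselCoeff_mul_pow ((lam / (2 * c)) ^ 2)
  have hinner : HasDerivAt (fun s => c ^ 2 * s ^ 2 - u ^ 2) (2 * c ^ 2 * t) t :=
    (((hasDerivAt_pow 2 t).const_mul (c ^ 2)).sub_const (u ^ 2)).congr_deriv (by ring)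
  have hderiv_t : HasDerivAt (fun s => seriesSum _ (c ^ 2 * s ^ 2 - u ^ 2)) _ t :=
    (hasDerivAt_seriesSum hb _).comp t hinner
  simp only [F_eq_seriesSum]
  rw [hderiv_t.deriv, iteratedDeriv_two_seriesSum_sub_sq hb,
    tsum_evenMixture_eq hc.ne' ht.ne', tsum_oddMixture_eq hlam.ne' hc.ne' ht.ne']
  have hode := besselSeries_ode ((lam / (2 * c)) ^ 2) (c ^ 2 * t ^ 2 - u ^ 2)
  linear_combination (norm := skip) (-(4 * c * Real.exp (-(lam * t)) / lam)) * hode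
  field_simp
  ring

/-- The planar density decomposes as a Poisson mixture of the conditional
densities of the half-diagonal `𝒰(t)` given `N(t) = 2k+2` (`k ≥ 0`) and
`N(t) = 2k+1` (`k ≥ 1`, written with the shift `k ↦ k+1`). -/
theorem planarDensity_conditional_decomposition
    (lam c t u : ℝ) (hlam : 0 < lam) (hc : 0 < c) (ht : 0 < t)
    (hu0 : 0 < u) (huct : u < c * t) :
    Real.exp (-(lam * t)) / c *
        (lam * F lam c u t + deriv (fun s => F lam c u s) t +
          2 * c ^ 2 / lam * iteratedDeriv 2 (fun v => F lam c v t) u) =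
      (∑' k : ℕ, Real.exp (-(lam * t)) * (lam * t) ^ (2 * k + 2) /
          (Nat.factorial (2 * k + 2) : ℝ) *
          ((Nat.factorial (2 * k + 2) : ℝ) /
            ((Nat.factorial k : ℝ) * (Nat.factorial (k + 1) : ℝ))) *
          (c ^ 2 * t ^ 2 - u ^ 2) ^ k / (2 * c * t) ^ (2 * k + 1)) +
      (∑' k : ℕ, Real.exp (-(lam * t)) * (lam * t) ^ (2 * (k + 1) + 1) /
          (Nat.factorial (2 * (k + 1) + 1) : ℝ) *
          ((Nat.factorial (2 * (k + 1) + 1) : ℝ) /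
            (2 ^ (2 * (k + 1)) * (c * t) ^ (2 * (k + 1) + 1) *
              (Nat.factorial k : ℝ) * (Nat.factorial (k + 2) : ℝ))) *
          (c ^ 2 * t ^ 2 - u ^ 2) ^ k * (c ^ 2 * t ^ 2 + u ^ 2)) :=
  planarDensity_conditional_decomposition_general lam c t u hlam hc ht
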